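/- Let P be a reflexive polyhedron. The set −R := {−m : m ∈ M, ⟨v,m⟩ ≤ 1 for all vertices v of P°, with equality for exactly one vertex} is exactly the set of lattice points of P that lie in the relative interior of some codimension-one face of P. -/

import Mathlib

open Finset

/-- The standard pairing between `ℝⁿ` and its dual (identified with `ℝⁿ`). -/
def pairR {n : ℕ} (x y : Fin n → ℝ) : ℝ := ∑ i, x i * y i

/-- A point of `M_ℝ = ℝⁿ` is integral if it lies in the lattice `M = ℤⁿ`. -/
def IsIntegralPt {n : ℕ} (x : Fin n → ℝ) : Prop := ∀ i, ∃ z : ℤ, x i = (z : ℝ)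

/-- The polar `P° = {x | ⟨x,y⟩ ≥ -1 for all y ∈ P}`. -/
def polarSet {n : ℕ} (P : Set (Fin n → ℝ)) : Set (Fin n → ℝ) :=
  {x | ∀ y ∈ P, -1 ≤ pairR x y}

/-- An integral (lattice) polytope: the convex hull of finitely many lattice points. -/
def IsLatticePolytope {n : ℕ} (P : Set (Fin n → ℝ)) : Prop :=
  ∃ S : Finset (Fin n → ℝ), (∀ x ∈ S, IsIntegralPt x) ∧
    P = convexHull ℝ (S : Set (Fin n → ℝ))

/-- `{y | ⟨u,y⟩ = c}` is a supporting hyperplane of `P` cutting out a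
codimension-one face. -/
def IsCodimOneSupport {n : ℕ} (P : Set (Fin n → ℝ)) (u : Fin n → ℝ) (c : ℝ) : Prop :=
  u ≠ 0 ∧ (∀ y ∈ P, c ≤ pairR u y) ∧
  Module.finrank ℝ (affineSpan ℝ {y ∈ P | pairR u y = c}).direction = n - 1

/-- A reflexive polytope: an integral polytope with `0` in its interior all of whose
codimension-one supporting hyperplanes have the form `{y | ⟨ℓ,y⟩ = -1}` with `ℓ`
in the dual lattice. -/
def IsReflexive {n : ℕ} (P : Set (Fin n → ℝ)) : Prop :=
  IsLatticePolytope P ∧ (0 : Fin n → ℝ) ∈ interior P ∧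
  ∀ u : Fin n → ℝ, ∀ c : ℝ, IsCodimOneSupport P u c →
    ∃ ℓ : Fin n → ℤ, {y : Fin n → ℝ | pairR u y = c} =
      {y : Fin n → ℝ | pairR (fun i => (ℓ i : ℝ)) y = -1}


/-!
Let `Q = P°`, compact because `0 ∈ int P`. At a vertex `v` of `Q` the vertices `s` of `P` with
`⟨v,s⟩ = -1` span `ℝⁿ`, otherwise `v` could be moved in both directions orthogonal to them;
so `Q` has finitely many vertices, and a linear form is determined by its values on `F_v`.
Krein–Milman and the bipolar theorem give `P = {x | -1 ≤ ⟨w,x⟩ for every vertex w of Q}`.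
Hence a point of `P` on which only the inequality of `v` is tight has a neighbourhood in the
hyperplane `⟨v,·⟩ = -1` contained in `F_v`. Conversely, a `w ∈ Q` tight at a relative interior
point of `F_v` is tight on all of `F_v`, hence `w = v`. For `x = -m` these are the two
conditions defining `-R`.
-/

open Filter Topology

section DotProduct
variable {K ι : Type*} [Field K] [Fintype ι] [DecidableEq ι]

lemma exists_dotProduct_eq_apply (f : Module.Dual K (ι → K)) : ∃ d : ι → K, ∀ y, f y = d ⬝ᵥ y :=
  ⟨(dotProductEquiv K ι).symm f, fun y => by
    rw [← dotProductEquiv_apply_apply, LinearEquiv.apply_symm_apply]⟩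

lemma span_eq_top_iff_forall_dotProduct_eq_zero {T : Set (ι → K)} :
    Submodule.span K T = ⊤ ↔ ∀ d : ι → K, (∀ s ∈ T, d ⬝ᵥ s = 0) → d = 0 := by
  constructor
  · intro hT d hd
    apply (dotProductEquiv K ι).map_eq_zero_iff.1
    exact LinearMap.ext_on hT fun s hs => by simpa using hd s hs
  · intro h
    by_contra hT
    obtain ⟨f, hf0, hfT⟩ :=
      Submodule.exists_dual_map_eq_bot_of_lt_top (lt_top_iff_ne_top.2 hT) inferInstance
    obtain ⟨d, hd⟩ := exists_dotProduct_eq_apply f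
    refine hf0 (LinearMap.ext fun y => ?_)
    rw [hd, h d fun s hs => ?_, zero_dotProduct, LinearMap.zero_apply]
    rw [← hd, ← Submodule.mem_bot K, ← hfT]
    exact Submodule.mem_map_of_mem (Submodule.subset_span hs)

end DotProduct

section Intrinsic

lemma mem_intrinsicInterior_of_isOpen {𝕜 V : Type*} [Ring 𝕜] [AddCommGroup V] [Module 𝕜 V]
    [TopologicalSpace V] {s U : Set V} {x : V} (hU : IsOpen U) (hxU : x ∈ U) (hxs : x ∈ s)
    (hUs : (affineSpan 𝕜 s : Set V) ∩ U ⊆ s) : x ∈ intrinsicInterior 𝕜 s :=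
  mem_intrinsicInterior.2 ⟨⟨x, subset_affineSpan 𝕜 s hxs⟩,
    mem_interior.2 ⟨((↑) : affineSpan 𝕜 s → V) ⁻¹' U, fun y hy => hUs ⟨y.2, hy⟩,
      hU.preimage continuous_subtype_val, hxU⟩, rfl⟩

lemma IsMinOn.apply_eq_of_mem_intrinsicInterior {E : Type*} [AddCommGroup E] [Module ℝ E]
    [TopologicalSpace E] [IsTopologicalAddGroup E] [ContinuousSMul ℝ E] {f : E →ₗ[ℝ] ℝ}
    {s : Set E} {x z : E} (hmin : IsMinOn f s x) (hx : x ∈ intrinsicInterior ℝ s) (hz : z ∈ s) :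
    f z = f x := by
  obtain ⟨⟨x, hxA⟩, hxs, rfl⟩ := mem_intrinsicInterior.1 hx
  let g : ℝ → affineSpan ℝ s := fun t =>
    ⟨t • (x - z) + x, AffineSubspace.smul_vsub_vadd_mem _ t hxA (subset_affineSpan ℝ s hz) hxA⟩
  have hg0 : g 0 = ⟨x, hxA⟩ := Subtype.ext (by simp [g])
  have hbeyond : ∀ᶠ t in 𝓝[>] 0, (g t : E) ∈ s := nhdsWithin_le_nhds <|
    (by fun_prop : Continuous g).continuousAt.preimage_mem_nhds
      (by rw [hg0]; exact mem_interior_iff_mem_nhds.1 hxs)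
  obtain ⟨t, ht, ht0⟩ := (hbeyond.and self_mem_nhdsWithin).exists
  have hxt := isMinOn_iff.1 hmin _ ht
  have hxz := isMinOn_iff.1 hmin z hz
  simp only [g, map_add, map_smul, map_sub, smul_eq_mul] at hxt
  nlinarith

end Intrinsic

section Polar
variable {n : ℕ}

lemma pairR_eq_dotProduct (x y : Fin n → ℝ) : pairR x y = x ⬝ᵥ y := rfl

lemma isClosed_setOf_le_pairR (c : ℝ) (y : Fin n → ℝ) : IsClosed {x | c ≤ pairR x y} :=
  isClosed_le continuous_const (continuous_id.dotProduct continuous_const)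

lemma convex_setOf_le_pairR (c : ℝ) (y : Fin n → ℝ) : Convex ℝ {x | c ≤ pairR x y} :=
  convex_halfSpace_ge ⟨fun a b => add_dotProduct a b y, fun t a => smul_dotProduct t a y⟩ c

lemma polarSet_eq_biInter (P : Set (Fin n → ℝ)) :
    polarSet P = ⋂ y ∈ P, {x | -1 ≤ pairR x y} := by
  ext; simp [polarSet]

lemma isClosed_polarSet (P : Set (Fin n → ℝ)) : IsClosed (polarSet P) :=
  polarSet_eq_biInter P ▸ isClosed_biInter fun y _ => isClosed_setOf_le_pairR (-1) y

lemma convex_polarSet (P : Set (Fin n → ℝ)) : Convex ℝ (polarSet P) :=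
  polarSet_eq_biInter P ▸ convex_iInter₂ fun y _ => convex_setOf_le_pairR (-1) y

lemma polarSet_convexHull (S : Set (Fin n → ℝ)) :
    polarSet (convexHull ℝ S) = {v | ∀ s ∈ S, -1 ≤ pairR v s} := by
  refine Set.Subset.antisymm (fun v hv s hs => hv s (subset_convexHull ℝ S hs)) fun v hv => ?_
  have hconv : Convex ℝ {y | -1 ≤ pairR v y} := by
    simpa only [pairR_eq_dotProduct, dotProduct_comm v] using convex_setOf_le_pairR (-1) v
  exact convexHull_min hv hconv

lemma isBounded_polarSet {P : Set (Fin n → ℝ)} (h0 : (0 : Fin n → ℝ) ∈ interior P) :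
    Bornology.IsBounded (polarSet P) := by
  obtain ⟨ε, hε, hball⟩ := Metric.mem_nhds_iff.1 (mem_interior_iff_mem_nhds.1 h0)
  refine isBounded_iff_forall_norm_le.2 ⟨2 / ε, fun w hw => ?_⟩
  refine (pi_norm_le_iff_of_nonneg (by positivity)).2 fun i => ?_
  have hsingle : ∀ c : ℝ, |c| < ε → -1 ≤ w i * c := fun c hc => by
    rw [← dotProduct_single]
    exact hw _ (hball (by simpa [Pi.norm_single] using hc))
  have h₁ := hsingle (ε / 2) (by rw [abs_of_pos (half_pos hε)]; linarith)
  have h₂ := hsingle (-(ε / 2)) (by rw [abs_neg, abs_of_pos (half_pos hε)]; linarith)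
  rw [Real.norm_eq_abs, le_div_iff₀ hε]
  cases abs_cases (w i) <;> nlinarith

lemma isCompact_polarSet {P : Set (Fin n → ℝ)} (h0 : (0 : Fin n → ℝ) ∈ interior P) :
    IsCompact (polarSet P) :=
  Metric.isCompact_of_isClosed_isBounded (isClosed_polarSet P) (isBounded_polarSet h0)

lemma mem_of_forall_polarSet_le_pairR {P : Set (Fin n → ℝ)} (hPc : Convex ℝ P)
    (hPcl : IsClosed P) (h0 : (0 : Fin n → ℝ) ∈ P) {x : Fin n → ℝ}
    (hx : ∀ v ∈ polarSet P, -1 ≤ pairR v x) : x ∈ P := by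
  by_contra hxP
  obtain ⟨f, u, hfP, hfx⟩ := geometric_hahn_banach_closed_point hPc hPcl hxP
  obtain ⟨d, hd⟩ := exists_dotProduct_eq_apply (f : Module.Dual ℝ (Fin n → ℝ))
  have hu : 0 < u := by simpa using hfP 0 h0
  have hpair : ∀ y, pairR (-u⁻¹ • d) y = -(f y / u) := fun y => by
    rw [pairR_eq_dotProduct, smul_dotProduct, ← hd, smul_eq_mul, neg_mul, inv_mul_eq_div]
    rfl
  have hvP : -u⁻¹ • d ∈ polarSet P := fun y hy => by
    rw [hpair, neg_le_neg_iff, div_le_one hu]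
    exact (hfP y hy).le
  have := hx _ hvP
  rw [hpair, neg_le_neg_iff, div_le_one hu] at this
  linarith

end Polar

lemma IsCompact.subset_of_extremePoints_subset {E : Type*} [AddCommGroup E] [Module ℝ E]
    [TopologicalSpace E] [T2Space E] [IsTopologicalAddGroup E] [ContinuousSMul ℝ E]
    [LocallyConvexSpace ℝ E] {K C : Set E} (hK : IsCompact K) (hKc : Convex ℝ K)
    (hC : IsClosed C) (hCc : Convex ℝ C) (h : K.extremePoints ℝ ⊆ C) : K ⊆ C :=
  closure_convexHull_extremePoints hK hKc ▸ closure_minimal (convexHull_min h hCc) hC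

section Facets
variable {n : ℕ} {S : Finset (Fin n → ℝ)}

lemma span_facetVertices_eq_top {v : Fin n → ℝ}
    (hv : v ∈ (polarSet (convexHull ℝ (S : Set (Fin n → ℝ)))).extremePoints ℝ) :
    Submodule.span ℝ {s | s ∈ S ∧ pairR v s = -1} = ⊤ := by
  refine span_eq_top_iff_forall_dotProduct_eq_zero.2 fun d hd => ?_
  by_contra hd0
  have hpair : ∀ (t : ℝ) (s : Fin n → ℝ), pairR (v + t • d) s = pairR v s + t * (d ⬝ᵥ s) :=
    fun t s => by rw [pairR_eq_dotProduct, add_dotProduct, smul_dotProduct, smul_eq_mul]; rfl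
  have hnear : ∀ᶠ t in 𝓝 (0 : ℝ), v + t • d ∈ polarSet (convexHull ℝ (S : Set (Fin n → ℝ))) := by
    simp only [polarSet_convexHull, Set.mem_ofPred_eq, Finset.mem_coe, hpair]
    refine (eventually_all_finset S).2 fun s hs => ?_
    by_cases hvs : pairR v s = -1
    · exact .of_forall fun t => by rw [hd s ⟨hs, hvs⟩, hvs, mul_zero, add_zero]
    · have hlt : -1 < pairR v s :=
        (hv.1 s (subset_convexHull ℝ _ hs)).lt_of_ne (Ne.symm hvs)
      have hcont : Continuous fun t : ℝ => pairR v s + t * (d ⬝ᵥ s) := by fun_prop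
      exact (hcont.tendsto' 0 _ (by simp)).eventually (lt_mem_nhds hlt) |>.mono fun _ => le_of_lt
  obtain ⟨ε, hε, hball⟩ := Metric.eventually_nhds_iff.1 hnear
  have hε' : dist (ε / 2) 0 < ε := by rw [Real.dist_0_eq_abs, abs_of_pos (half_pos hε)]; linarith
  have hmid : v ∈ openSegment ℝ (v + (ε / 2) • d) (v + (-(ε / 2)) • d) :=
    ⟨1 / 2, 1 / 2, by norm_num, by norm_num, by norm_num, by module⟩
  have hvd := (mem_extremePoints.1 hv).2 _ (hball hε') _ (hball (by simpa using hε')) hmid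
  exact hd0 ((smul_eq_zero.1 (add_eq_left.1 hvd.1)).resolve_left (half_pos hε).ne')

lemma finite_extremePoints_polarSet (S : Finset (Fin n → ℝ)) :
    ((polarSet (convexHull ℝ (S : Set (Fin n → ℝ)))).extremePoints ℝ).Finite := by
  refine Set.Finite.of_finite_image (f := fun v => {s | s ∈ S ∧ pairR v s = -1})
    (S.finite_toSet.finite_subsets.subset ?_) fun v₁ h₁ v₂ _ heq => ?_
  · rintro _ ⟨v, -, rfl⟩ s hs
    exact hs.1
  · refine sub_eq_zero.1 (span_eq_top_iff_forall_dotProduct_eq_zero.1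
      (span_facetVertices_eq_top h₁) _ fun s hs => ?_)
    have hs₂ : s ∈ S ∧ pairR v₂ s = -1 := (Set.ext_iff.1 heq s).1 hs
    rw [sub_dotProduct, ← pairR_eq_dotProduct, ← pairR_eq_dotProduct, hs.2, hs₂.2, sub_self]

lemma mem_convexHull_iff_forall_extremePoints_polarSet
    (h0 : (0 : Fin n → ℝ) ∈ interior (convexHull ℝ (S : Set (Fin n → ℝ)))) {x : Fin n → ℝ} :
    x ∈ convexHull ℝ (S : Set (Fin n → ℝ)) ↔
      ∀ w ∈ (polarSet (convexHull ℝ (S : Set (Fin n → ℝ)))).extremePoints ℝ, -1 ≤ pairR w x := by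
  refine ⟨fun hx w hw => extremePoints_subset hw x hx, fun hx => ?_⟩
  refine mem_of_forall_polarSet_le_pairR (convex_convexHull ℝ _)
    (S.finite_toSet.isClosed_convexHull ℝ) (interior_subset h0) fun v hv => ?_
  exact (isCompact_polarSet h0).subset_of_extremePoints_subset (convex_polarSet _)
    (isClosed_setOf_le_pairR (-1) x) (convex_setOf_le_pairR (-1) x) hx hv

lemma pairR_eq_of_mem_affineSpan {v : Fin n → ℝ} {c : ℝ} {F : Set (Fin n → ℝ)}
    (hF : ∀ y ∈ F, pairR v y = c) {y : Fin n → ℝ} (hy : y ∈ affineSpan ℝ F) : pairR v y = c := by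
  simpa [pairR_eq_dotProduct] using AffineMap.eqOn_affineSpan
    (f := (dotProductEquiv ℝ (Fin n) v : (Fin n → ℝ) →ₗ[ℝ] ℝ).toAffineMap)
    (g := AffineMap.const ℝ (Fin n → ℝ) c) hF hy

lemma mem_intrinsicInterior_facet
    (h0 : (0 : Fin n → ℝ) ∈ interior (convexHull ℝ (S : Set (Fin n → ℝ)))) {v x : Fin n → ℝ}
    (hxP : x ∈ convexHull ℝ (S : Set (Fin n → ℝ))) (hvx : pairR v x = -1)
    (hslack : ∀ w ∈ (polarSet (convexHull ℝ (S : Set (Fin n → ℝ)))).extremePoints ℝ, w ≠ v →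
      -1 < pairR w x) :
    x ∈ intrinsicInterior ℝ {y ∈ convexHull ℝ (S : Set (Fin n → ℝ)) | pairR v y = -1} := by
  set V := (polarSet (convexHull ℝ (S : Set (Fin n → ℝ)))).extremePoints ℝ
  have hU : IsOpen (⋂ w ∈ V \ {v}, {y | -1 < pairR w y}) :=
    (finite_extremePoints_polarSet S).sdiff.isOpen_biInter fun w _ =>
      isOpen_lt continuous_const (continuous_const.dotProduct continuous_id)
  refine mem_intrinsicInterior_of_isOpen hU (Set.mem_iInter₂.2 fun w hw => hslack w hw.1 hw.2)
    ⟨hxP, hvx⟩ ?_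
  rintro y ⟨hyA, hyU⟩
  have hvy : pairR v y = -1 := pairR_eq_of_mem_affineSpan (fun _ hz => hz.2) hyA
  refine ⟨(mem_convexHull_iff_forall_extremePoints_polarSet h0).2 fun w hw => ?_, hvy⟩
  rcases eq_or_ne w v with rfl | hwv
  · exact hvy.ge
  · exact (Set.mem_iInter₂.1 hyU w ⟨hw, hwv⟩).le

lemma eq_of_mem_intrinsicInterior_facet {v w x : Fin n → ℝ}
    (hv : v ∈ (polarSet (convexHull ℝ (S : Set (Fin n → ℝ)))).extremePoints ℝ)
    (hx : x ∈ intrinsicInterior ℝ {y ∈ convexHull ℝ (S : Set (Fin n → ℝ)) | pairR v y = -1})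
    (hw : w ∈ polarSet (convexHull ℝ (S : Set (Fin n → ℝ)))) (hwx : pairR w x = -1) : w = v := by
  have hmin : IsMinOn (dotProductEquiv ℝ (Fin n) w)
      {y ∈ convexHull ℝ (S : Set (Fin n → ℝ)) | pairR v y = -1} x :=
    isMinOn_iff.2 fun y hy => by simpa [← pairR_eq_dotProduct, hwx] using hw y hy.1
  refine sub_eq_zero.1 (span_eq_top_iff_forall_dotProduct_eq_zero.1
    (span_facetVertices_eq_top hv) _ fun s hs => ?_)
  have hws := hmin.apply_eq_of_mem_intrinsicInterior hx ⟨subset_convexHull ℝ _ hs.1, hs.2⟩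
  simp only [dotProductEquiv_apply_apply, ← pairR_eq_dotProduct, hwx] at hws
  rw [sub_dotProduct, ← pairR_eq_dotProduct, ← pairR_eq_dotProduct, hws, hs.2, sub_self]

lemma exists_mem_intrinsicInterior_facet_iff
    (h0 : (0 : Fin n → ℝ) ∈ interior (convexHull ℝ (S : Set (Fin n → ℝ)))) {x : Fin n → ℝ} :
    (∃ v ∈ (polarSet (convexHull ℝ (S : Set (Fin n → ℝ)))).extremePoints ℝ,
        x ∈ intrinsicInterior ℝ {y ∈ convexHull ℝ (S : Set (Fin n → ℝ)) | pairR v y = -1}) ↔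
      (∀ w ∈ (polarSet (convexHull ℝ (S : Set (Fin n → ℝ)))).extremePoints ℝ, -1 ≤ pairR w x) ∧
        ∃! v, v ∈ (polarSet (convexHull ℝ (S : Set (Fin n → ℝ)))).extremePoints ℝ ∧
          pairR v x = -1 := by
  constructor
  · rintro ⟨v, hv, hx⟩
    obtain ⟨hxP, hvx⟩ := intrinsicInterior_subset hx
    exact ⟨(mem_convexHull_iff_forall_extremePoints_polarSet h0).1 hxP, v, ⟨hv, hvx⟩,
      fun w hw => eq_of_mem_intrinsicInterior_facet hv hx (extremePoints_subset hw.1) hw.2⟩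
  · rintro ⟨hle, v, ⟨hv, hvx⟩, huniq⟩
    refine ⟨v, hv, mem_intrinsicInterior_facet h0
      ((mem_convexHull_iff_forall_extremePoints_polarSet h0).2 hle) hvx fun w hw hwv => ?_⟩
    exact (hle w hw).lt_of_ne fun h => hwv (huniq w ⟨hw, h.symm⟩)

end Facets

/-- For a reflexive polytope `P`, the set `-R` of negatives of roots,
i.e. lattice points `m` with `⟨v,m⟩ ≤ 1` for all vertices `v` of `P°` with equality for
exactly one vertex, is exactly the set of lattice points of `P` lying in the relative
interior of some codimension-one face `F_v = {y ∈ P | ⟨v,y⟩ = -1}` of `P`. -/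
theorem neg_roots_eq_facet_interior_points {n : ℕ} (P : Set (Fin n → ℝ))
    (hP : IsReflexive P) :
    {x : Fin n → ℝ | ∃ m : Fin n → ℤ, x = (fun i => -(m i : ℝ)) ∧
      (∀ v ∈ Set.extremePoints ℝ (polarSet P), pairR v (fun i => (m i : ℝ)) ≤ 1) ∧
      (∃! v, v ∈ Set.extremePoints ℝ (polarSet P) ∧ pairR v (fun i => (m i : ℝ)) = 1)}
    = {x : Fin n → ℝ | IsIntegralPt x ∧ ∃ v ∈ Set.extremePoints ℝ (polarSet P),
        x ∈ intrinsicInterior ℝ {y ∈ P | pairR v y = -1}} := by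
  obtain ⟨⟨S, -, rfl⟩, h0, -⟩ := hP
  have hneg : ∀ (m : Fin n → ℤ) (w : Fin n → ℝ),
      pairR w (fun i => (m i : ℝ)) = -pairR w (fun i => -(m i : ℝ)) := fun m w => by
    simp [pairR_eq_dotProduct, ← dotProduct_neg w, Pi.neg_def]
  ext x
  simp only [Set.mem_ofPred_eq, exists_mem_intrinsicInterior_facet_iff h0]
  constructor
  · rintro ⟨m, rfl, hle, hone⟩
    simp only [hneg m, neg_le, neg_eq_iff_eq_neg] at hle hone
    exact ⟨fun i => ⟨-m i, by push_cast; rfl⟩, hle, hone⟩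
  · rintro ⟨hint, hle, hone⟩
    choose z hz using hint
    have hx : x = fun i => -((-z i : ℤ) : ℝ) := funext fun i => by simp [hz i]
    refine ⟨fun i => -z i, hx, ?_⟩
    simp only [hneg, ← hx, neg_eq_iff_eq_neg]
    exact ⟨fun w hw => neg_le.2 (hle w hw), hone⟩
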